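/- arXiv:1804.04489 — 3 statements merged into one kernel-verified Lean document; each statement's English description precedes it below -/
import Mathlib

section
/- Let γ ≥ 1, r ∈ ℝ, τ ∈ (0, τ₀] with τ ≥ τ₁ > 0, and M_j = (j+1)^r τ^(j+1)/(j!)^γ. Then for all j ≥ 1 and all 1 ≤ ℓ ≤ ⌈j/2⌉, there is a constant C = C(γ, r, τ₀, τ₁) such that binom(j, ℓ) · M_j / (M_{j-ℓ} · M_ℓ^{1/2} · M_{ℓ+1}^{1/2}) ≤ C · binom(j, ℓ)^{1-γ} · (ℓ+1)^{γ/2 - r} ≤ C' (ℓ+1)^{γ/2 - r}. -/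
private lemma aux_rpow_two_bound {x : ℝ} (s : ℝ) (hx1 : 1/2 ≤ x) (hx2 : x ≤ 2) :
    x ^ s ≤ 2 ^ |s| := by
  have hx0 : (0:ℝ) < x := by linarith
  rcases le_or_gt 0 s with hs | hs
  · rw [abs_of_nonneg hs]
    exact Real.rpow_le_rpow (by linarith) hx2 hs
  · rw [abs_of_neg hs]
    calc x ^ s ≤ (1/2 : ℝ) ^ s := Real.rpow_le_rpow_of_nonpos (by norm_num) hx1 hs.le
    _ = 2 ^ (-s) := by
        rw [one_div, Real.inv_rpow (by norm_num), ← Real.rpow_neg (by norm_num)]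

/-- Combinatorial Gevrey weight estimate: for 1 ≤ ℓ ≤ ⌈j/2⌉,
binom(j,ℓ) M_j / (M_{j-ℓ} M_ℓ^{1/2} M_{ℓ+1}^{1/2})
  ≤ C binom(j,ℓ)^{1-γ} (ℓ+1)^{γ/2-r} ≤ C' (ℓ+1)^{γ/2-r},
with constants depending only on γ, r, τ₀, τ₁. -/
theorem stmt_3 (γ r τ₀ τ₁ : ℝ) (hγ : 1 ≤ γ) (hτ₁ : 0 < τ₁) (hττ : τ₁ ≤ τ₀) :
    ∃ C C' : ℝ, 0 < C ∧ 0 < C' ∧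
      ∀ τ : ℝ, τ₁ ≤ τ → τ ≤ τ₀ →
      ∀ j ℓ : ℕ, 1 ≤ j → 1 ≤ ℓ → ℓ ≤ (j + 1) / 2 →
        (fun M : ℕ → ℝ =>
          (Nat.choose j ℓ : ℝ) * M j /
              (M (j - ℓ) * (M ℓ) ^ ((1 : ℝ)/2) * (M (ℓ + 1)) ^ ((1 : ℝ)/2))
            ≤ C * (Nat.choose j ℓ : ℝ) ^ (1 - γ) * ((ℓ : ℝ) + 1) ^ (γ/2 - r) ∧
          C * (Nat.choose j ℓ : ℝ) ^ (1 - γ) * ((ℓ : ℝ) + 1) ^ (γ/2 - r)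
            ≤ C' * ((ℓ : ℝ) + 1) ^ (γ/2 - r))
        (fun k : ℕ => ((k : ℝ) + 1) ^ r * τ ^ (k + 1) / (Nat.factorial k : ℝ) ^ γ) := by
  set C0 : ℝ := (2:ℝ) ^ |r| * (2:ℝ) ^ |r| * τ₁ ^ (-(3/2) : ℝ) with hC0
  have hC0pos : 0 < C0 := by positivity
  refine ⟨C0, C0, hC0pos, hC0pos, ?_⟩
  intro τ hτ1 hτ0 j ℓ hj hℓ hhalf
  simp only
  have hlj : ℓ ≤ j := by omega
  have h2l : 2 * ℓ ≤ j + 1 := by omega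
  have hτ : 0 < τ := lt_of_lt_of_le hτ₁ hτ1
  set M : ℕ → ℝ := fun k : ℕ => ((k : ℝ) + 1) ^ r * τ ^ (k + 1) / (Nat.factorial k : ℝ) ^ γ
    with hMdef
  have hMpos : ∀ k, 0 < M k := by
    intro k
    have h1 : (0:ℝ) < (Nat.factorial k : ℝ) := by exact_mod_cast k.factorial_pos
    rw [hMdef]
    positivity
  have hcpos : (0:ℝ) < (Nat.choose j ℓ : ℝ) := by
    exact_mod_cast Nat.choose_pos hlj
  have hjl1 : (0:ℝ) < (j:ℝ) - (ℓ:ℝ) + 1 := by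
    have : (ℓ:ℝ) ≤ (j:ℝ) := by exact_mod_cast hlj
    linarith
  have hl1 : (0:ℝ) < (ℓ:ℝ) + 1 := by positivity
  have hl2 : (0:ℝ) < (ℓ:ℝ) + 2 := by positivity
  have hj1 : (0:ℝ) < (j:ℝ) + 1 := by positivity
  -- the exact identity
  have hlogM : ∀ k : ℕ, Real.log (M k)
      = r * Real.log ((k:ℝ) + 1) + ((k:ℝ) + 1) * Real.log τ
        - γ * Real.log (Nat.factorial k : ℝ) := by
    intro k
    have h1 : (0:ℝ) < (Nat.factorial k : ℝ) := by exact_mod_cast k.factorial_pos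
    rw [hMdef]
    simp only
    rw [Real.log_div (by positivity) (by positivity),
      Real.log_mul (by positivity) (by positivity),
      Real.log_rpow (by positivity), Real.log_rpow h1, Real.log_pow]
    push_cast
    ring
  have hfac : Real.log (Nat.factorial j : ℝ)
      = Real.log (Nat.choose j ℓ : ℝ) + Real.log (Nat.factorial ℓ : ℝ)
        + Real.log (Nat.factorial (j - ℓ) : ℝ) := by
    have h1 : (0:ℝ) < (Nat.factorial ℓ : ℝ) := by exact_mod_cast ℓ.factorial_pos
    have h2 : (0:ℝ) < (Nat.factorial (j-ℓ) : ℝ) := by exact_mod_cast (j-ℓ).factorial_pos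
    have hid : (Nat.choose j ℓ : ℝ) * (Nat.factorial ℓ : ℝ) * (Nat.factorial (j-ℓ) : ℝ)
        = (Nat.factorial j : ℝ) := by
      exact_mod_cast congrArg (Nat.cast (R := ℝ)) (Nat.choose_mul_factorial_mul_factorial hlj)
    rw [← hid, Real.log_mul (by positivity) (by positivity),
      Real.log_mul (by positivity) (by positivity)]
  have hfac2 : Real.log (Nat.factorial (ℓ+1) : ℝ)
      = Real.log ((ℓ:ℝ) + 1) + Real.log (Nat.factorial ℓ : ℝ) := by
    have h1 : (0:ℝ) < (Nat.factorial ℓ : ℝ) := by exact_mod_cast ℓ.factorial_pos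
    rw [Nat.factorial_succ]
    push_cast
    rw [Real.log_mul (by positivity) (by positivity)]
  have hcastsub : ((j - ℓ : ℕ) : ℝ) = (j:ℝ) - (ℓ:ℝ) := Nat.cast_sub hlj
  have key : (Nat.choose j ℓ : ℝ) * M j /
        (M (j - ℓ) * (M ℓ) ^ ((1 : ℝ)/2) * (M (ℓ + 1)) ^ ((1 : ℝ)/2))
      = (Nat.choose j ℓ : ℝ) ^ (1 - γ)
        * ((((j:ℝ)+1) / ((j:ℝ) - (ℓ:ℝ) + 1)) ^ r
          * (((ℓ:ℝ)+1) / ((ℓ:ℝ)+2)) ^ (r/2) * τ ^ (-(3/2) : ℝ))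
        * ((ℓ:ℝ) + 1) ^ (γ/2 - r) := by
    have hL : (0:ℝ) < (Nat.choose j ℓ : ℝ) * M j /
        (M (j - ℓ) * (M ℓ) ^ ((1 : ℝ)/2) * (M (ℓ + 1)) ^ ((1 : ℝ)/2)) := by
      have := hMpos j; have := hMpos (j - ℓ); have := hMpos ℓ; have := hMpos (ℓ+1)
      positivity
    have hR : (0:ℝ) < (Nat.choose j ℓ : ℝ) ^ (1 - γ)
        * ((((j:ℝ)+1) / ((j:ℝ) - (ℓ:ℝ) + 1)) ^ r
          * (((ℓ:ℝ)+1) / ((ℓ:ℝ)+2)) ^ (r/2) * τ ^ (-(3/2) : ℝ))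
        * ((ℓ:ℝ) + 1) ^ (γ/2 - r) := by positivity
    apply Real.log_injOn_pos (Set.mem_Ioi.2 hL) (Set.mem_Ioi.2 hR)
    rw [Real.log_div (by positivity) (by positivity),
      Real.log_mul hcpos.ne' (hMpos j).ne',
      Real.log_mul (by have := hMpos (j-ℓ); have := hMpos ℓ; positivity)
        (by have := hMpos (ℓ+1); positivity),
      Real.log_mul (hMpos (j-ℓ)).ne' (by have := hMpos ℓ; positivity),
      Real.log_rpow (hMpos ℓ), Real.log_rpow (hMpos (ℓ+1)),
      hlogM j, hlogM (j-ℓ), hlogM ℓ, hlogM (ℓ+1),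
      Real.log_mul (by positivity) (by positivity),
      Real.log_mul (by positivity) (by positivity),
      Real.log_rpow hcpos,
      Real.log_mul (by positivity) (by positivity),
      Real.log_mul (by positivity) (by positivity),
      Real.log_rpow (div_pos hj1 hjl1), Real.log_rpow (div_pos hl1 hl2),
      Real.log_rpow hτ, Real.log_rpow hl1,
      Real.log_div hj1.ne' hjl1.ne', Real.log_div hl1.ne' hl2.ne',
      hfac, hfac2, hcastsub]
    push_cast [Nat.cast_sub hlj]
    ring
  have hbound : (((j:ℝ)+1) / ((j:ℝ) - (ℓ:ℝ) + 1)) ^ r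
      * (((ℓ:ℝ)+1) / ((ℓ:ℝ)+2)) ^ (r/2) * τ ^ (-(3/2) : ℝ) ≤ C0 := by
    have h1 : (((j:ℝ)+1) / ((j:ℝ) - (ℓ:ℝ) + 1)) ^ r ≤ (2:ℝ) ^ |r| := by
      apply aux_rpow_two_bound
      · rw [le_div_iff₀ hjl1]
        have : (ℓ:ℝ) ≤ (j:ℝ) := by exact_mod_cast hlj
        linarith
      · rw [div_le_iff₀ hjl1]
        have : (2:ℝ) * (ℓ:ℝ) ≤ (j:ℝ) + 1 := by exact_mod_cast h2l
        linarith
    have h2 : (((ℓ:ℝ)+1) / ((ℓ:ℝ)+2)) ^ (r/2) ≤ (2:ℝ) ^ |r| := by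
      calc (((ℓ:ℝ)+1) / ((ℓ:ℝ)+2)) ^ (r/2) ≤ (2:ℝ) ^ |r/2| := by
            apply aux_rpow_two_bound
            · rw [le_div_iff₀ hl2]; linarith
            · rw [div_le_iff₀ hl2]; linarith
      _ ≤ (2:ℝ) ^ |r| := by
            apply Real.rpow_le_rpow_of_exponent_le one_le_two
            rw [abs_div, abs_two]
            linarith [abs_nonneg r]
    have h3 : τ ^ (-(3/2) : ℝ) ≤ τ₁ ^ (-(3/2) : ℝ) :=
      Real.rpow_le_rpow_of_nonpos hτ₁ hτ1 (by norm_num)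
    have hp1 : (0:ℝ) ≤ (((j:ℝ)+1) / ((j:ℝ) - (ℓ:ℝ) + 1)) ^ r := by positivity
    have hp2 : (0:ℝ) ≤ (((ℓ:ℝ)+1) / ((ℓ:ℝ)+2)) ^ (r/2) := by positivity
    have hp3 : (0:ℝ) ≤ τ ^ (-(3/2) : ℝ) := by positivity
    rw [hC0]
    apply mul_le_mul (mul_le_mul h1 h2 hp2 (by positivity)) h3 hp3 (by positivity)
  constructor
  · rw [key]
    have hx : (0:ℝ) < ((ℓ:ℝ) + 1) ^ (γ/2 - r) := by positivity
    have hc1 : (0:ℝ) < (Nat.choose j ℓ : ℝ) ^ (1 - γ) := by positivity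
    calc (Nat.choose j ℓ : ℝ) ^ (1 - γ)
        * ((((j:ℝ)+1) / ((j:ℝ) - (ℓ:ℝ) + 1)) ^ r
          * (((ℓ:ℝ)+1) / ((ℓ:ℝ)+2)) ^ (r/2) * τ ^ (-(3/2) : ℝ))
        * ((ℓ:ℝ) + 1) ^ (γ/2 - r)
        ≤ (Nat.choose j ℓ : ℝ) ^ (1 - γ) * C0 * ((ℓ:ℝ) + 1) ^ (γ/2 - r) := by
          apply mul_le_mul_of_nonneg_right _ hx.le
          exact mul_le_mul_of_nonneg_left hbound hc1.le
    _ = C0 * (Nat.choose j ℓ : ℝ) ^ (1 - γ) * ((ℓ:ℝ) + 1) ^ (γ/2 - r) := by ring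
  · have h1 : (Nat.choose j ℓ : ℝ) ^ (1 - γ) ≤ 1 := by
      apply Real.rpow_le_one_of_one_le_of_nonpos
      · exact_mod_cast Nat.one_le_iff_ne_zero.2 (Nat.choose_pos hlj).ne'
      · linarith
    have hx : (0:ℝ) ≤ ((ℓ:ℝ) + 1) ^ (γ/2 - r) := by positivity
    calc C0 * (Nat.choose j ℓ : ℝ) ^ (1 - γ) * ((ℓ:ℝ) + 1) ^ (γ/2 - r)
        ≤ C0 * 1 * ((ℓ:ℝ) + 1) ^ (γ/2 - r) := by
          apply mul_le_mul_of_nonneg_right _ hx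
          exact mul_le_mul_of_nonneg_left h1 hC0pos.le
    _ = C0 * ((ℓ:ℝ) + 1) ^ (γ/2 - r) := by ring
end

section
/- Let u, v : 𝕋 × [0,1] → ℝ be smooth with ∂_x u + ∂_y v = 0 on 𝕋 × (0,1), and u = v = 0 on y ∈ {0,1}. Set ω^{in} = ∂_y u^{in} where u^{in} is smooth with u^{in} = u - u^{bl}, v^{in}(x,y) = -∫₀^y ∂_x u^{in}(x,z)dz. Then ∫_{𝕋×[0,1]} v^{in} ∂_y u^{in} dx dy = -∫_𝕋 (∫₀¹ ∂_x u^{bl}(x,y) dy) u^{bl}(x,1) dx, given that ∫₀¹ ∂_x u(x,y) dy = 0 for all x and u(x,1) = 0. -/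
open intervalIntegral MeasureTheory

lemma aux_hasDerivAt_fst (f : ℝ × ℝ → ℝ) (hf : ContDiff ℝ (⊤ : ℕ∞) f) (x y : ℝ) :
    HasDerivAt (fun t => f (t, y)) (fderiv ℝ f (x, y) (1, 0)) x := by
  have h := (hf.differentiable (by simp) (x, y)).hasFDerivAt
  have hg : HasDerivAt (fun t : ℝ => ((t, y) : ℝ × ℝ)) ((1 : ℝ), (0 : ℝ)) x :=
    (hasDerivAt_id x).prodMk (hasDerivAt_const x y)
  exact h.comp_hasDerivAt x hg

lemma aux_hasDerivAt_snd (f : ℝ × ℝ → ℝ) (hf : ContDiff ℝ (⊤ : ℕ∞) f) (x y : ℝ) :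
    HasDerivAt (fun s => f (x, s)) (fderiv ℝ f (x, y) (0, 1)) y := by
  have h := (hf.differentiable (by simp) (x, y)).hasFDerivAt
  have hg : HasDerivAt (fun s : ℝ => ((x, s) : ℝ × ℝ)) ((0 : ℝ), (1 : ℝ)) y :=
    (hasDerivAt_const y x).prodMk (hasDerivAt_id y)
  exact h.comp_hasDerivAt y hg

lemma aux_cont (f : ℝ × ℝ → ℝ) (hf : ContDiff ℝ (⊤ : ℕ∞) f) (w : ℝ × ℝ) :
    Continuous (fun p => fderiv ℝ f p w) :=
  (hf.continuous_fderiv (by simp)).clm_apply continuous_const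

/-- The hydrostatic-trick cancellation identity:
∫∫ v^{in} ∂_y u^{in} dx dy = -∫_𝕋 (∫₀¹ ∂_x u^{bl} dy) u^{bl}(x,1) dx. -/
theorem stmt_7 (u v ubl : ℝ → ℝ → ℝ)
    (hu : ContDiff ℝ (⊤ : ℕ∞) (fun p : ℝ × ℝ => u p.1 p.2))
    (hv : ContDiff ℝ (⊤ : ℕ∞) (fun p : ℝ × ℝ => v p.1 p.2))
    (hubl : ContDiff ℝ (⊤ : ℕ∞) (fun p : ℝ × ℝ => ubl p.1 p.2))
    (hperu : ∀ x y, u (x + 2 * Real.pi) y = u x y)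
    (hperv : ∀ x y, v (x + 2 * Real.pi) y = v x y)
    (hperbl : ∀ x y, ubl (x + 2 * Real.pi) y = ubl x y)
    (hdiv : ∀ x : ℝ, ∀ y ∈ Set.Ioo (0:ℝ) 1,
      deriv (fun t => u t y) x + deriv (fun z => v x z) y = 0)
    (hu0 : ∀ x, u x 0 = 0) (hu1 : ∀ x, u x 1 = 0)
    (hv0 : ∀ x, v x 0 = 0) (hv1 : ∀ x, v x 1 = 0)
    (hmean : ∀ x, ∫ y in (0:ℝ)..1, deriv (fun t => u t y) x = 0) :
    (∫ x in (0:ℝ)..(2*Real.pi), ∫ y in (0:ℝ)..1,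
        (-(∫ z in (0:ℝ)..y, deriv (fun t => u t z - ubl t z) x))
          * deriv (fun s => u x s - ubl x s) y)
    = -(∫ x in (0:ℝ)..(2*Real.pi),
        (∫ y in (0:ℝ)..1, deriv (fun t => ubl t y) x) * ubl x 1) := by
  have hfc : ContDiff ℝ (⊤ : ℕ∞) (fun p : ℝ × ℝ => u p.1 p.2 - ubl p.1 p.2) := hu.sub hubl
  set Dx : ℝ × ℝ → ℝ :=
    fun p => fderiv ℝ (fun p : ℝ × ℝ => u p.1 p.2 - ubl p.1 p.2) p (1, 0) with hDxdef
  set Dy : ℝ × ℝ → ℝ :=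
    fun p => fderiv ℝ (fun p : ℝ × ℝ => u p.1 p.2 - ubl p.1 p.2) p (0, 1) with hDydef
  set Ax : ℝ × ℝ → ℝ :=
    fun p => fderiv ℝ (fun p : ℝ × ℝ => u p.1 p.2) p (1, 0) with hAxdef
  set Bx : ℝ × ℝ → ℝ :=
    fun p => fderiv ℝ (fun p : ℝ × ℝ => ubl p.1 p.2) p (1, 0) with hBxdef
  have hDxcont : Continuous Dx := aux_cont _ hfc _
  have hDycont : Continuous Dy := aux_cont _ hfc _
  have hAxcont : Continuous Ax := aux_cont _ hu _
  have hBxcont : Continuous Bx := aux_cont _ hubl _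
  have hdx : ∀ x y, HasDerivAt (fun t => u t y - ubl t y) (Dx (x, y)) x :=
    fun x y => aux_hasDerivAt_fst _ hfc x y
  have hdy : ∀ x y, HasDerivAt (fun s => u x s - ubl x s) (Dy (x, y)) y :=
    fun x y => aux_hasDerivAt_snd _ hfc x y
  have hax : ∀ x y, HasDerivAt (fun t => u t y) (Ax (x, y)) x :=
    fun x y => aux_hasDerivAt_fst _ hu x y
  have hbx : ∀ x y, HasDerivAt (fun t => ubl t y) (Bx (x, y)) x :=
    fun x y => aux_hasDerivAt_fst _ hubl x y
  have hderiv1 : ∀ x z, deriv (fun t => u t z - ubl t z) x = Dx (x, z) :=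
    fun x z => (hdx x z).deriv
  have hderiv2 : ∀ x y, deriv (fun s => u x s - ubl x s) y = Dy (x, y) :=
    fun x y => (hdy x y).deriv
  have hderiv3 : ∀ x y, deriv (fun t => ubl t y) x = Bx (x, y) :=
    fun x y => (hbx x y).deriv
  have hDxsplit : ∀ x y, Dx (x, y) = Ax (x, y) - Bx (x, y) :=
    fun x y => (hdx x y).unique ((hax x y).sub (hbx x y))
  simp only [hderiv1, hderiv2, hderiv3]
  -- the mean-zero condition for Ax
  have hmean' : ∀ x, (∫ y in (0:ℝ)..1, Ax (x, y)) = 0 := by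
    intro x
    have he : (∫ y in (0:ℝ)..1, Ax (x, y)) = ∫ y in (0:ℝ)..1, deriv (fun t => u t y) x :=
      intervalIntegral.integral_congr fun y _ => ((hax x y).deriv).symm
    rw [he, hmean x]
  -- continuity helpers for slices
  have hDxslice : ∀ x : ℝ, Continuous fun z => Dx (x, z) := fun x =>
    show Continuous fun z => Dx (x, z) from hDxcont.comp (continuous_const.prodMk continuous_id)
  have hDyslice : ∀ x : ℝ, Continuous fun y => Dy (x, y) := fun x =>
    show Continuous fun y => Dy (x, y) from hDycont.comp (continuous_const.prodMk continuous_id)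
  have hFcont : Continuous fun p : ℝ × ℝ => u p.1 p.2 - ubl p.1 p.2 := hfc.continuous
  have hFslice : ∀ x : ℝ, Continuous fun y => u x y - ubl x y :=
    fun x => hFcont.comp (continuous_const.prodMk continuous_id)
  -- per-x integration by parts
  have key : ∀ x, (∫ y in (0:ℝ)..1, (-(∫ z in (0:ℝ)..y, Dx (x, z))) * Dy (x, y))
      = -((∫ y in (0:ℝ)..1, Bx (x, y)) * ubl x 1)
        + ∫ y in (0:ℝ)..1, Dx (x, y) * (u x y - ubl x y) := by
    intro x
    have hG : ∀ y : ℝ, HasDerivAt (fun y => ∫ z in (0:ℝ)..y, Dx (x, z)) (Dx (x, y)) y :=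
      fun y => ((hDxslice x).integral_hasStrictDerivAt 0 y).hasDerivAt
    have hibp := intervalIntegral.integral_mul_deriv_eq_deriv_mul
      (a := (0:ℝ)) (b := 1)
      (u := fun y => ∫ z in (0:ℝ)..y, Dx (x, z)) (u' := fun y => Dx (x, y))
      (v := fun y => u x y - ubl x y) (v' := fun y => Dy (x, y))
      (fun y _ => hG y) (fun y _ => hdy x y)
      ((hDxslice x).intervalIntegrable _ _) ((hDyslice x).intervalIntegrable _ _)
    have hG1 : (∫ z in (0:ℝ)..1, Dx (x, z)) = -(∫ y in (0:ℝ)..1, Bx (x, y)) := by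
      have hA : IntervalIntegrable (fun z => Ax (x, z)) MeasureTheory.volume 0 1 :=
        (show Continuous fun z => Ax (x, z) from
          hAxcont.comp (continuous_const.prodMk continuous_id)).intervalIntegrable _ _
      have hB : IntervalIntegrable (fun z => Bx (x, z)) MeasureTheory.volume 0 1 :=
        (show Continuous fun z => Bx (x, z) from
          hBxcont.comp (continuous_const.prodMk continuous_id)).intervalIntegrable _ _
      have : (∫ z in (0:ℝ)..1, Dx (x, z))
          = (∫ z in (0:ℝ)..1, Ax (x, z)) - ∫ z in (0:ℝ)..1, Bx (x, z) := by
        rw [← intervalIntegral.integral_sub hA hB]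
        exact intervalIntegral.integral_congr fun z _ => hDxsplit x z
      rw [this, hmean' x, zero_sub]
    simp only [intervalIntegral.integral_same, zero_mul, sub_zero] at hibp
    have hL : (∫ y in (0:ℝ)..1, (-(∫ z in (0:ℝ)..y, Dx (x, z))) * Dy (x, y))
        = -(∫ y in (0:ℝ)..1, (∫ z in (0:ℝ)..y, Dx (x, z)) * Dy (x, y)) := by
      rw [← intervalIntegral.integral_neg]
      exact intervalIntegral.integral_congr fun y _ => by ring
    rw [hL, hibp, hG1, hu1 x]
    ring
  -- split the outer integral
  have h2pi : (0:ℝ) ≤ 2 * Real.pi := by positivity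
  have hcont1 : Continuous fun x => -((∫ y in (0:ℝ)..1, Bx (x, y)) * ubl x 1) := by
    apply Continuous.neg
    apply Continuous.mul
    · have hBxu : Continuous (Function.uncurry fun (x y : ℝ) => Bx (x, y)) :=
        hBxcont.comp (continuous_fst.prodMk continuous_snd)
      exact intervalIntegral.continuous_parametric_intervalIntegral_of_continuous' hBxu 0 1
    · exact hubl.continuous.comp (continuous_id.prodMk continuous_const)
  have hHcont : Continuous (Function.uncurry fun x y => Dx (x, y) * (u x y - ubl x y)) := by
    apply Continuous.mul
    · exact hDxcont.comp (continuous_fst.prodMk continuous_snd)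
    · exact hFcont.comp (continuous_fst.prodMk continuous_snd)
  have hcont2 : Continuous fun x => ∫ y in (0:ℝ)..1, Dx (x, y) * (u x y - ubl x y) :=
    intervalIntegral.continuous_parametric_intervalIntegral_of_continuous' hHcont 0 1
  have hsplit : (∫ x in (0:ℝ)..(2*Real.pi),
        ∫ y in (0:ℝ)..1, (-(∫ z in (0:ℝ)..y, Dx (x, z))) * Dy (x, y))
      = (∫ x in (0:ℝ)..(2*Real.pi), -((∫ y in (0:ℝ)..1, Bx (x, y)) * ubl x 1))
        + ∫ x in (0:ℝ)..(2*Real.pi), ∫ y in (0:ℝ)..1, Dx (x, y) * (u x y - ubl x y) := by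
    rw [← intervalIntegral.integral_add (hcont1.intervalIntegrable _ _)
      (hcont2.intervalIntegrable _ _)]
    exact intervalIntegral.integral_congr fun x _ => key x
  -- the remainder term vanishes by Fubini and periodicity
  have hinner : ∀ y : ℝ, (∫ x in (0:ℝ)..(2*Real.pi), Dx (x, y) * (u x y - ubl x y)) = 0 := by
    intro y
    have hprim : ∀ t ∈ Set.uIcc (0:ℝ) (2*Real.pi),
        HasDerivAt (fun t => (u t y - ubl t y) * (u t y - ubl t y) / 2)
          (Dx (t, y) * (u t y - ubl t y)) t := by
      intro t _
      have h := ((hdx t y).mul (hdx t y)).div_const 2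
      refine h.congr_deriv ?_
      ring
    have hintg : IntervalIntegrable (fun t => Dx (t, y) * (u t y - ubl t y))
        volume 0 (2*Real.pi) := by
      apply Continuous.intervalIntegrable
      exact (hDxcont.comp (continuous_id.prodMk continuous_const)).mul
        (hFcont.comp (continuous_id.prodMk continuous_const))
    rw [intervalIntegral.integral_eq_sub_of_hasDerivAt hprim hintg]
    have h1 := hperu 0 y
    have h2 := hperbl 0 y
    rw [zero_add] at h1 h2
    rw [h1, h2]
    ring
  have hzero : (∫ x in (0:ℝ)..(2*Real.pi),
      ∫ y in (0:ℝ)..1, Dx (x, y) * (u x y - ubl x y)) = 0 := by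
    have hswap : (∫ x in Set.Ioc (0:ℝ) (2*Real.pi),
          ∫ y in Set.Ioc (0:ℝ) 1, Dx (x, y) * (u x y - ubl x y))
        = ∫ y in Set.Ioc (0:ℝ) 1,
            ∫ x in Set.Ioc (0:ℝ) (2*Real.pi), Dx (x, y) * (u x y - ubl x y) := by
      apply MeasureTheory.integral_integral_swap
      rw [MeasureTheory.Measure.prod_restrict]
      apply (hHcont.locallyIntegrable.integrableOn_isCompact
        ((isCompact_Icc (a := (0:ℝ)) (b := 2*Real.pi)).prod
          (isCompact_Icc (a := (0:ℝ)) (b := 1)))).mono_set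
      exact Set.prod_mono Set.Ioc_subset_Icc_self Set.Ioc_subset_Icc_self
    rw [intervalIntegral.integral_of_le h2pi]
    have e1 : ∀ x : ℝ, (∫ y in (0:ℝ)..1, Dx (x, y) * (u x y - ubl x y))
        = ∫ y in Set.Ioc (0:ℝ) 1, Dx (x, y) * (u x y - ubl x y) :=
      fun x => intervalIntegral.integral_of_le zero_le_one
    simp_rw [e1]
    rw [hswap]
    have e2 : ∀ y : ℝ, (∫ x in Set.Ioc (0:ℝ) (2*Real.pi), Dx (x, y) * (u x y - ubl x y)) = 0 :=
      fun y => by rw [← intervalIntegral.integral_of_le h2pi]; exact hinner y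
    simp_rw [e2]
    simp
  rw [hsplit, hzero, add_zero, intervalIntegral.integral_neg]
end

section
/- Let F : ℝ → ℂ be integrable, supported in [0,∞), and let its Fourier transform F̂(ζ) = ∫₀^∞ F(t) e^{-iζt} dt. Let g : {Im ζ ≤ 0} → ℂ be holomorphic on {Im ζ < 0}, continuous up to the boundary, with |g(ζ)| ≤ C e^{-√|ζ| y₀} for some y₀ > 0 and all ζ with Im ζ ≤ 0. Assume F̂(ζ) → 0 uniformly in Re ζ as Im ζ → -∞ and F̂(ζ) → 0 uniformly in Im ζ ≤ 0 as |Re ζ| → ∞. Then for every t < 0, lim_{s→∞} (1/2π) ∫_{-s}^{s} F̂(ζ) g(ζ) e^{iζt} dζ = 0. -/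
open MeasureTheory Complex Filter Set Topology

/-!
Put `Φ(ζ) = F̂(ζ) g(ζ) e^{iζt}`. For `t < 0` and `Im ζ ≤ 0` we have `|e^{iζt}| ≤ 1`, and `F̂`
(a Laplace transform of an integrable function) is holomorphic on `Im ζ < 0` and continuous up to
the real line, so by Cauchy's theorem the integral of `Φ` over `[-s, s]` equals its integral over
`[-s, s] - iμ` plus the two vertical sides of height `μ`. The bottom edge is at most
`sup_{Im ζ = -μ} |F̂| · C ∫ e^{-y₀ √|x|} dx`, small once `μ` is large; for this fixed `μ` the
sides are small once `s` is large, because `F̂ → 0` as `|Re ζ| → ∞` and `g` is bounded.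
-/

theorem integrable_comp_abs_of_integrableOn_Ioi {h : ℝ → ℝ} (hh : IntegrableOn h (Ioi 0)) :
    Integrable fun x => h |x| := by
  have hpos : IntegrableOn (fun x => h |x|) (Ioi 0) :=
    hh.congr_fun (fun x hx => by rw [abs_of_pos hx]) measurableSet_Ioi
  rw [← integrableOn_univ, ← Iio_union_Ici (a := (0 : ℝ)), integrableOn_union,
    integrableOn_Ici_iff_integrableOn_Ioi]
  refine ⟨?_, hpos⟩
  rw [← (Measure.measurePreserving_neg (volume : Measure ℝ)).integrableOn_comp_preimage
      (Homeomorph.neg ℝ).measurableEmbedding]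
  simpa [Function.comp_def] using hpos

theorem integrable_exp_neg_sqrt_abs_mul {y₀ : ℝ} (hy₀ : 0 < y₀) :
    Integrable fun x : ℝ => Real.exp (-Real.sqrt |x| * y₀) := by
  refine integrable_comp_abs_of_integrableOn_Ioi (h := fun x => Real.exp (-Real.sqrt x * y₀)) ?_
  refine (integrableOn_rpow_mul_exp_neg_mul_rpow (s := 0) (p := 1 / 2) (by norm_num)
    (by norm_num) hy₀).congr_fun (fun x hx => ?_) measurableSet_Ioi
  simp only [Real.rpow_zero, one_mul, Real.sqrt_eq_rpow]
  ring_nf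

theorem norm_cexp_I_mul_le_one {ζ : ℂ} (hζ : ζ.im ≤ 0) {t : ℝ} (ht : t ≤ 0) :
    ‖cexp (I * ζ * t)‖ ≤ 1 := by
  rw [norm_exp, Real.exp_le_one_iff]
  simp [mul_re]
  nlinarith

noncomputable def fourierLaplace (F : ℝ → ℂ) (ζ : ℂ) : ℂ :=
  ∫ t in Ioi (0 : ℝ), F t * cexp (-(I * ζ * t))

namespace fourierLaplace

variable {F : ℝ → ℂ}

theorem norm_kernel (ζ : ℂ) (t : ℝ) : ‖cexp (-(I * ζ * t))‖ = Real.exp (ζ.im * t) := by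
  simp [norm_exp, mul_re]

theorem norm_kernel_le_one {ζ : ℂ} (hζ : ζ.im ≤ 0) {t : ℝ} (ht : 0 ≤ t) :
    ‖cexp (-(I * ζ * t))‖ ≤ 1 := by
  rw [norm_kernel, Real.exp_le_one_iff]
  nlinarith

theorem aestronglyMeasurable_integrand (hF : IntegrableOn F (Ioi 0)) (ζ : ℂ) :
    AEStronglyMeasurable (fun t : ℝ => F t * cexp (-(I * ζ * t))) (volume.restrict (Ioi 0)) :=
  hF.aestronglyMeasurable.mul
    (by fun_prop : Continuous fun t : ℝ => cexp (-(I * ζ * t))).aestronglyMeasurable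

theorem continuousOn (hF : IntegrableOn F (Ioi 0)) :
    ContinuousOn (fourierLaplace F) {ζ | ζ.im ≤ 0} := by
  refine continuousOn_of_dominated (bound := fun t => ‖F t‖)
    (fun ζ _ => aestronglyMeasurable_integrand hF ζ) (fun ζ hζ => ?_) hF.norm
    (Eventually.of_forall fun t =>
      (by fun_prop : Continuous fun ζ : ℂ => F t * cexp (-(I * ζ * t))).continuousOn)
  filter_upwards [ae_restrict_mem measurableSet_Ioi] with t ht
  rw [norm_mul]
  exact mul_le_of_le_one_right (norm_nonneg _) (norm_kernel_le_one hζ ht.le)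

/-- `t e^{-δt} ≤ 1/δ` bounds the derivative of the kernel uniformly on `{Im ζ ≤ -δ}`. -/
theorem norm_deriv_kernel_le {δ : ℝ} (hδ : 0 < δ) {ζ : ℂ} (hζ : ζ.im ≤ -δ) {t : ℝ} (ht : 0 ≤ t) :
    ‖cexp (-(I * ζ * t)) * -(I * t)‖ ≤ δ⁻¹ := by
  have hexp : Real.exp (ζ.im * t) ≤ Real.exp (-(δ * t)) := Real.exp_le_exp.2 (by nlinarith)
  have hlin : δ * t ≤ Real.exp (δ * t) := by linarith [Real.add_one_le_exp (δ * t)]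
  rw [norm_mul, norm_kernel, norm_neg, norm_mul, norm_I, one_mul, norm_real,
    Real.norm_of_nonneg ht]
  calc Real.exp (ζ.im * t) * t ≤ Real.exp (-(δ * t)) * t := by gcongr
    _ = δ⁻¹ * (δ * t / Real.exp (δ * t)) := by rw [Real.exp_neg]; field_simp
    _ ≤ δ⁻¹ * 1 := by gcongr; exact div_le_one_of_le₀ hlin (Real.exp_pos _).le
    _ = δ⁻¹ := mul_one _

theorem differentiableOn (hF : IntegrableOn F (Ioi 0)) :
    DifferentiableOn ℂ (fourierLaplace F) {ζ | ζ.im < 0} := by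
  intro ζ₀ hζ₀
  set δ := -ζ₀.im / 2 with hδ_def
  have hδ : 0 < δ := by linarith [show ζ₀.im < 0 from hζ₀]
  have hball : ∀ ζ ∈ Metric.ball ζ₀ δ, ζ.im ≤ -δ := fun ζ hζ => by
    have := (abs_im_le_norm (ζ - ζ₀)).trans (mem_ball_iff_norm.1 hζ).le
    rw [sub_im, abs_le] at this
    linarith
  have hderiv := hasDerivAt_integral_of_dominated_loc_of_deriv_le
    (F := fun ζ t => F t * cexp (-(I * ζ * t)))
    (F' := fun ζ t => F t * (cexp (-(I * ζ * t)) * -(I * t)))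
    (Metric.ball_mem_nhds ζ₀ hδ) (Eventually.of_forall (aestronglyMeasurable_integrand hF))
    (hF.norm.mono' (aestronglyMeasurable_integrand hF ζ₀) ?_)
    (hF.aestronglyMeasurable.mul (by fun_prop : Continuous fun t : ℝ =>
      cexp (-(I * ζ₀ * t)) * -(I * t)).aestronglyMeasurable)
    ?_ (hF.norm.mul_const δ⁻¹) ?_
  · exact hderiv.2.differentiableAt.differentiableWithinAt
  · filter_upwards [ae_restrict_mem measurableSet_Ioi] with t ht
    rw [norm_mul]
    exact mul_le_of_le_one_right (norm_nonneg _) (norm_kernel_le_one hζ₀.le ht.le)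
  · filter_upwards [ae_restrict_mem measurableSet_Ioi] with t ht ζ hζ
    rw [norm_mul]
    exact mul_le_mul_of_nonneg_left (norm_deriv_kernel_le hδ (hball ζ hζ) ht.le) (norm_nonneg _)
  · refine Eventually.of_forall fun t ζ _ => ?_
    have hlin : HasDerivAt (fun ζ : ℂ => -(I * ζ * t)) (-(I * t)) ζ := by
      simpa using (((hasDerivAt_id ζ).const_mul I).mul_const (t : ℂ)).fun_neg
    exact hlin.cexp.const_mul (F t)

end fourierLaplace

section LowerHalfPlane

variable {Φ : ℂ → ℂ}

theorem integral_eq_integral_sub_mul_I_add_sides (hc : ContinuousOn Φ {ζ | ζ.im ≤ 0})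
    (hd : DifferentiableOn ℂ Φ {ζ | ζ.im < 0}) (s : ℝ) {μ : ℝ} (hμ : 0 ≤ μ) :
    ∫ x in (-s)..s, Φ x = (∫ x in (-s)..s, Φ (x - μ * I)) +
      I • (∫ y in (-μ)..0, Φ (s + y * I)) - I • ∫ y in (-μ)..0, Φ (-s + y * I) := by
  have hrect := integral_boundary_rect_eq_zero_of_continuousOn_of_differentiableOn Φ
    ⟨-s, -μ⟩ ⟨s, 0⟩ (hc.mono fun ζ hζ => ?_) (hd.mono fun ζ hζ => ?_)
  · simp only [ofReal_neg, ofReal_zero, zero_mul, add_zero, neg_mul, ← sub_eq_add_neg] at hrect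
    linear_combination -hrect
  · have := (mem_reProdIm.1 hζ).2
    rw [uIcc_of_le (by linarith)] at this
    exact this.2
  · have := (mem_reProdIm.1 hζ).2
    rw [max_eq_right (by linarith)] at this
    exact this.2

theorem norm_I_smul_integral_le {c μ ε : ℝ} (hμ : 0 ≤ μ)
    (h : ∀ y ∈ Ioc (-μ) 0, ‖Φ (c + y * I)‖ ≤ ε) :
    ‖I • ∫ y in (-μ)..0, Φ (c + y * I)‖ ≤ μ * ε := by
  rw [norm_smul, norm_I, one_mul]
  refine (intervalIntegral.norm_integral_le_of_norm_le_const fun y hy => h y ?_).trans_eq ?_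
  · rwa [uIoc_of_le (by linarith)] at hy
  · rw [sub_neg_eq_add, zero_add, abs_of_nonneg hμ, mul_comm]

theorem norm_intervalIntegral_le_mul_integral {f : ℝ → ℂ} {K : ℝ → ℝ} (hK : Integrable K) {ε : ℝ}
    (h : ∀ x, ‖f x‖ ≤ ε * K x) {s : ℝ} (hs : 0 ≤ s) :
    ‖∫ x in (-s)..s, f x‖ ≤ ε * ∫ x, K x := by
  have hεK : Integrable fun x => ε * K x := hK.const_mul ε
  calc ‖∫ x in (-s)..s, f x‖ ≤ ∫ x in (-s)..s, ε * K x :=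
        intervalIntegral.norm_integral_le_of_norm_le (by linarith) (.of_forall fun x _ => h x)
          hεK.intervalIntegrable
    _ ≤ ∫ x, ε * K x := by
        rw [intervalIntegral.integral_of_le (by linarith)]
        exact setIntegral_le_integral hεK (.of_forall fun x => (norm_nonneg _).trans (h x))
    _ = ε * ∫ x, K x := integral_const_mul ε K

theorem tendsto_integral_of_lowerHalfPlane (hc : ContinuousOn Φ {ζ | ζ.im ≤ 0})
    (hd : DifferentiableOn ℂ Φ {ζ | ζ.im < 0}) {K : ℝ → ℝ} (hK : Integrable K)
    (hbottom : ∀ ε > 0, ∃ μ ≥ (0 : ℝ), ∀ x : ℝ, ‖Φ (x - μ * I)‖ ≤ ε * K x)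
    (hside : ∀ μ ≥ 0, ∀ ε > 0, ∃ R, ∀ ζ : ℂ, -μ ≤ ζ.im → ζ.im ≤ 0 → R ≤ |ζ.re| → ‖Φ ζ‖ ≤ ε) :
    Tendsto (fun s : ℝ => ∫ x in (-s)..s, Φ x) atTop (𝓝 0) := by
  rw [NormedAddGroup.tendsto_nhds_zero]
  intro ε hε
  set A := |∫ x, K x| + 1
  have hA : 0 < A := by positivity
  obtain ⟨μ, hμ, hμK⟩ := hbottom (ε / (2 * A)) (by positivity)
  obtain ⟨R, hR⟩ := hside μ hμ (ε / (4 * (μ + 1))) (by positivity)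
  filter_upwards [eventually_ge_atTop (max R 0)] with s hs
  have hs0 : 0 ≤ s := (le_max_right _ _).trans hs
  have hside_le : ∀ c : ℝ, |c| = s →
      ‖I • ∫ y in (-μ)..0, Φ (c + y * I)‖ ≤ μ * (ε / (4 * (μ + 1))) :=
    fun c hc => norm_I_smul_integral_le hμ fun y hy => hR _ (by simpa using hy.1.le)
      (by simpa using hy.2) (by simpa [hc] using (le_max_left _ _).trans hs)
  have hbot_le := norm_intervalIntegral_le_mul_integral hK hμK hs0
  have hbot_small : ε / (2 * A) * ∫ x, K x < ε / 2 :=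
    calc ε / (2 * A) * ∫ x, K x ≤ ε / (2 * A) * |∫ x, K x| := by gcongr; exact le_abs_self _
      _ < ε / (2 * A) * A := by gcongr; linarith
      _ = ε / 2 := by field_simp
  have hside_small : μ * (ε / (4 * (μ + 1))) < ε / 4 := by
    rw [mul_div_assoc', div_lt_iff₀ (by positivity)]
    linarith
  have hleft := hside_le (-s) (by rw [abs_neg, abs_of_nonneg hs0])
  rw [ofReal_neg] at hleft
  rw [integral_eq_integral_sub_mul_I_add_sides hc hd s hμ]
  calc _ ≤ _ := norm_sub_le_of_le
        (norm_add_le_of_le hbot_le (hside_le s (abs_of_nonneg hs0))) hleft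
    _ < ε / 2 + ε / 4 + ε / 4 := by gcongr
    _ = ε := by ring

end LowerHalfPlane

section ProductWithExponential

variable {f g : ℂ → ℂ} {t : ℝ}

theorem norm_mul_mul_cexp_le (ht : t ≤ 0) {ζ : ℂ} (hζ : ζ.im ≤ 0) :
    ‖f ζ * g ζ * cexp (I * ζ * t)‖ ≤ ‖f ζ‖ * ‖g ζ‖ := by
  rw [norm_mul, norm_mul]
  exact mul_le_of_le_one_right (by positivity) (norm_cexp_I_mul_le_one hζ ht)

theorem exists_norm_mul_mul_cexp_sub_mul_I_le (ht : t ≤ 0) {G : ℝ → ℝ}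
    (hg : ∀ ζ : ℂ, ζ.im ≤ 0 → ‖g ζ‖ ≤ G ζ.re)
    (hf : ∀ ε > 0, ∃ R : ℝ, ∀ ζ : ℂ, ζ.im ≤ -R → ‖f ζ‖ ≤ ε) :
    ∀ ε > 0, ∃ μ ≥ (0 : ℝ), ∀ x : ℝ,
      ‖f (x - μ * I) * g (x - μ * I) * cexp (I * (x - μ * I) * t)‖ ≤ ε * G x := by
  intro ε hε
  obtain ⟨R, hR⟩ := hf ε hε
  refine ⟨max R 0, le_max_right _ _, fun x => ?_⟩
  set ζ : ℂ := x - (max R 0 : ℝ) * I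
  have him : ζ.im = -max R 0 := by simp [ζ]
  have hgζ := hg ζ (by simp [him])
  rw [show ζ.re = x by simp [ζ]] at hgζ
  exact (norm_mul_mul_cexp_le ht (by simp [him])).trans
    (mul_le_mul (hR ζ (by simp [him])) hgζ (norm_nonneg _) hε.le)

theorem exists_norm_mul_mul_cexp_le_of_abs_re_ge (ht : t ≤ 0) {M : ℝ} (hM : 0 < M)
    (hg : ∀ ζ : ℂ, ζ.im ≤ 0 → ‖g ζ‖ ≤ M)
    (hf : ∀ ε > 0, ∃ R : ℝ, ∀ ζ : ℂ, ζ.im ≤ 0 → R ≤ |ζ.re| → ‖f ζ‖ ≤ ε) :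
    ∀ μ ≥ (0 : ℝ), ∀ ε > 0, ∃ R, ∀ ζ : ℂ, -μ ≤ ζ.im → ζ.im ≤ 0 → R ≤ |ζ.re| →
      ‖f ζ * g ζ * cexp (I * ζ * t)‖ ≤ ε := by
  intro _ _ ε hε
  obtain ⟨R, hR⟩ := hf (ε / M) (by positivity)
  refine ⟨R, fun ζ _ hζ hζR => (norm_mul_mul_cexp_le ht hζ).trans ?_⟩
  calc ‖f ζ‖ * ‖g ζ‖ ≤ ε / M * M :=
        mul_le_mul (hR ζ hζ hζR) (hg ζ hζ) (norm_nonneg _) (by positivity)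
    _ = ε := div_mul_cancel₀ ε hM.ne'

end ProductWithExponential

theorem stmt_19_general (F : ℝ → ℂ) (hF_int : Integrable F)
    (g : ℂ → ℂ) (C y₀ : ℝ) (hC : 0 < C) (hy₀ : 0 < y₀)
    (hg_holo : DifferentiableOn ℂ g {ζ : ℂ | ζ.im < 0})
    (hg_cont : ContinuousOn g {ζ : ℂ | ζ.im ≤ 0})
    (hg_bound : ∀ ζ : ℂ, ζ.im ≤ 0 →
      ‖g ζ‖ ≤ C * Real.exp (-Real.sqrt (‖ζ‖) * y₀))
    (Fhat : ℂ → ℂ)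
    (hFhat : ∀ ζ : ℂ, Fhat ζ = ∫ t in Set.Ioi (0:ℝ), F t * Complex.exp (-(Complex.I * ζ * t)))
    (hdecay_im : ∀ ε > (0:ℝ), ∃ R : ℝ, ∀ ζ : ℂ, ζ.im ≤ -R → ‖Fhat ζ‖ ≤ ε)
    (hdecay_re : ∀ ε > (0:ℝ), ∃ R : ℝ, ∀ ζ : ℂ, ζ.im ≤ 0 → R ≤ |ζ.re| →
      ‖Fhat ζ‖ ≤ ε) :
    ∀ t : ℝ, t < 0 →
      Tendsto (fun s : ℝ =>
          (1 / (2 * Real.pi)) •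
            ∫ ξ in (-s)..s, Fhat ξ * g ξ * Complex.exp (Complex.I * ξ * t))
        atTop (nhds 0) := by
  intro t ht
  have hFhat' : Fhat = fourierLaplace F := funext hFhat
  have hg_re : ∀ ζ : ℂ, ζ.im ≤ 0 → ‖g ζ‖ ≤ C * Real.exp (-Real.sqrt |ζ.re| * y₀) :=
    fun ζ hζ => (hg_bound ζ hζ).trans <| by
      gcongr
      exact abs_re_le_norm ζ
  have hg_le : ∀ ζ : ℂ, ζ.im ≤ 0 → ‖g ζ‖ ≤ C := fun ζ hζ =>
    (hg_bound ζ hζ).trans <| mul_le_of_le_one_right hC.le <|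
      Real.exp_le_one_iff.2 (by nlinarith [Real.sqrt_nonneg ‖ζ‖])
  have hc : ContinuousOn (fun ζ => Fhat ζ * g ζ * cexp (I * ζ * t)) {ζ | ζ.im ≤ 0} :=
    ((hFhat' ▸ fourierLaplace.continuousOn hF_int.integrableOn).mul hg_cont).mul
      (by fun_prop : Continuous fun ζ : ℂ => cexp (I * ζ * t)).continuousOn
  have hd : DifferentiableOn ℂ (fun ζ => Fhat ζ * g ζ * cexp (I * ζ * t)) {ζ | ζ.im < 0} :=
    ((hFhat' ▸ fourierLaplace.differentiableOn hF_int.integrableOn).mul hg_holo).mul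
      (by fun_prop : Differentiable ℂ fun ζ : ℂ => cexp (I * ζ * t)).differentiableOn
  simpa using (tendsto_integral_of_lowerHalfPlane hc hd
    ((integrable_exp_neg_sqrt_abs_mul hy₀).const_mul C)
    (exists_norm_mul_mul_cexp_sub_mul_I_le ht.le hg_re hdecay_im)
    (exists_norm_mul_mul_cexp_le_of_abs_re_ge ht.le hC hg_le hdecay_re)).const_smul
      (1 / (2 * Real.pi))

/-- Paley–Wiener type causality: if F is integrable, supported in [0,∞), its
Fourier transform F̂ decays uniformly as Im ζ → -∞ and as |Re ζ| → ∞ (Im ζ ≤ 0),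
and g is holomorphic in the lower half-plane, continuous up to the boundary, with
|g(ζ)| ≤ C e^{-√|ζ| y₀}, then for t < 0 the truncated inverse Fourier integrals
of F̂·g tend to 0. -/
theorem stmt_19 (F : ℝ → ℂ) (hF_int : Integrable F)
    (hF_supp : ∀ t : ℝ, t < 0 → F t = 0)
    (g : ℂ → ℂ) (C y₀ : ℝ) (hC : 0 < C) (hy₀ : 0 < y₀)
    (hg_holo : DifferentiableOn ℂ g {ζ : ℂ | ζ.im < 0})
    (hg_cont : ContinuousOn g {ζ : ℂ | ζ.im ≤ 0})
    (hg_bound : ∀ ζ : ℂ, ζ.im ≤ 0 →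
      ‖g ζ‖ ≤ C * Real.exp (-Real.sqrt (‖ζ‖) * y₀))
    (Fhat : ℂ → ℂ)
    (hFhat : ∀ ζ : ℂ, Fhat ζ = ∫ t in Set.Ioi (0:ℝ), F t * Complex.exp (-(Complex.I * ζ * t)))
    (hdecay_im : ∀ ε > (0:ℝ), ∃ R : ℝ, ∀ ζ : ℂ, ζ.im ≤ -R → ‖Fhat ζ‖ ≤ ε)
    (hdecay_re : ∀ ε > (0:ℝ), ∃ R : ℝ, ∀ ζ : ℂ, ζ.im ≤ 0 → R ≤ |ζ.re| →
      ‖Fhat ζ‖ ≤ ε) :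
    ∀ t : ℝ, t < 0 →
      Tendsto (fun s : ℝ =>
          (1 / (2 * Real.pi)) •
            ∫ ξ in (-s)..s, Fhat ξ * g ξ * Complex.exp (Complex.I * ξ * t))
        atTop (nhds 0) :=
  stmt_19_general F hF_int g C y₀ hC hy₀ hg_holo hg_cont hg_bound Fhat hFhat hdecay_im hdecay_re
end
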